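/- Let A ∈ 𝒜 satisfy condition (♦) with constant M, and fix an s-number sequence s and Banach spaces E, F. Then L_Φ^A(E,F) is a linear subspace of L(E,F); ‖·‖_Φ^A is a quasi-norm on L_Φ^A(E,F) (‖T‖_Φ^A = 0 iff T = 0, ‖αT‖_Φ^A = |α| ‖T‖_Φ^A, and ‖S+T‖_Φ^A ≤ M'(‖S‖_Φ^A + ‖T‖_Φ^A) where M' = max(M,1)); L_Φ^A(E,F) is complete under ‖·‖_Φ^A; and there exists a constant C > 0 such that ‖T‖ ≤ C ‖T‖_Φ^A for all T ∈ L_Φ^A(E,F), so the inclusion of (L_Φ^A(E,F), ‖·‖_Φ^A) into (L(E,F), ‖·‖) is continuous. -/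

import Mathlib

open Filter Topology

/-- An Orlicz function: convex, nondecreasing, continuous on `[0,∞)`,
vanishing at `0`, positive on `(0,∞)`, tending to `∞` at `∞`. -/
structure IsOrliczFn (φ : ℝ → ℝ) : Prop where
  convexOn : ConvexOn ℝ (Set.Ici (0 : ℝ)) φ
  monotoneOn : MonotoneOn φ (Set.Ici (0 : ℝ))
  continuousOn : ContinuousOn φ (Set.Ici (0 : ℝ))
  map_zero : φ 0 = 0
  pos : ∀ t : ℝ, 0 < t → 0 < φ t
  tendsto_atTop : Filter.Tendsto φ Filter.atTop Filter.atTop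

/-- A Musielak-Orlicz function: a sequence of Orlicz functions. -/
def IsMusielakOrlicz (Φ : ℕ → ℝ → ℝ) : Prop := ∀ n, IsOrliczFn (Φ n)

/-- The class 𝒜 of infinite matrices: every column is nonzero. -/
def MatrixClassA (a : ℕ → ℕ → ℝ) : Prop := ∀ k, ∃ n, a n k ≠ 0

/-- Condition (♦) on the matrix `A` with constant `M` (`0`-indexed version of
`|a_{n,2k-1}| + |a_{n,2k}| ≤ M |a_{n,k}|`). -/
def CondDiamond (a : ℕ → ℕ → ℝ) (M : ℝ) : Prop :=
  ∀ n k : ℕ, |a n (2 * k)| + |a n (2 * k + 1)| ≤ M * |a n k|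

/-- An `s`-number sequence in the sense of Pietsch (indexed from `0`, so that
`s T 0` is the paper's `s₁(T)`). -/
structure SNumberSeq : Type 1 where
  s : ∀ (E F : Type) [NormedAddCommGroup E] [NormedSpace ℝ E] [CompleteSpace E]
      [NormedAddCommGroup F] [NormedSpace ℝ F] [CompleteSpace F],
      (E →L[ℝ] F) → ℕ → ℝ
  nonneg : ∀ (E F : Type) [NormedAddCommGroup E] [NormedSpace ℝ E] [CompleteSpace E]
      [NormedAddCommGroup F] [NormedSpace ℝ F] [CompleteSpace F]
      (T : E →L[ℝ] F) (n : ℕ), 0 ≤ s E F T n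
  norm_eq : ∀ (E F : Type) [NormedAddCommGroup E] [NormedSpace ℝ E] [CompleteSpace E]
      [NormedAddCommGroup F] [NormedSpace ℝ F] [CompleteSpace F]
      (T : E →L[ℝ] F), s E F T 0 = ‖T‖
  antitone : ∀ (E F : Type) [NormedAddCommGroup E] [NormedSpace ℝ E] [CompleteSpace E]
      [NormedAddCommGroup F] [NormedSpace ℝ F] [CompleteSpace F]
      (T : E →L[ℝ] F), Antitone (s E F T)
  additive : ∀ (E F : Type) [NormedAddCommGroup E] [NormedSpace ℝ E] [CompleteSpace E]
      [NormedAddCommGroup F] [NormedSpace ℝ F] [CompleteSpace F]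
      (S T : E →L[ℝ] F) (m n : ℕ), s E F (S + T) (m + n) ≤ s E F S m + s E F T n
  ideal : ∀ (E F E₀ F₀ : Type)
      [NormedAddCommGroup E] [NormedSpace ℝ E] [CompleteSpace E]
      [NormedAddCommGroup F] [NormedSpace ℝ F] [CompleteSpace F]
      [NormedAddCommGroup E₀] [NormedSpace ℝ E₀] [CompleteSpace E₀]
      [NormedAddCommGroup F₀] [NormedSpace ℝ F₀] [CompleteSpace F₀]
      (R : F →L[ℝ] F₀) (S : E →L[ℝ] F) (T : E₀ →L[ℝ] E) (n : ℕ),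
      s E₀ F₀ ((R.comp S).comp T) n ≤ ‖R‖ * s E F S n * ‖T‖
  rank : ∀ (E F : Type) [NormedAddCommGroup E] [NormedSpace ℝ E] [CompleteSpace E]
      [NormedAddCommGroup F] [NormedSpace ℝ F] [CompleteSpace F]
      (T : E →L[ℝ] F) (n : ℕ),
      Module.rank ℝ ↥(LinearMap.range (T : E →ₗ[ℝ] F)) ≤ (n : Cardinal) → s E F T n = 0
  norming : ∀ n : ℕ,
      s (EuclideanSpace ℝ (Fin (n + 1))) (EuclideanSpace ℝ (Fin (n + 1)))
        (ContinuousLinearMap.id ℝ (EuclideanSpace ℝ (Fin (n + 1)))) n = 1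

/-- Membership of a scalar sequence `t = (s_k(T))` in `l_Φ^A`:
row sums `∑_k |a_{nk}| t_k` are finite and `∑_n φ_n(row_n/σ) < ∞` for some `σ > 0`. -/
def OpMemL (Φ : ℕ → ℝ → ℝ) (a : ℕ → ℕ → ℝ) (t : ℕ → ℝ) : Prop :=
  (∀ n, Summable fun k => |a n k| * t k) ∧
    ∃ σ > (0 : ℝ), Summable fun n => Φ n ((∑' k, |a n k| * t k) / σ)

/-- Membership in `h_Φ^A`: as `OpMemL` but for every `σ > 0`. -/
def OpMemH (Φ : ℕ → ℝ → ℝ) (a : ℕ → ℕ → ℝ) (t : ℕ → ℝ) : Prop :=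
  (∀ n, Summable fun k => |a n k| * t k) ∧
    ∀ σ > (0 : ℝ), Summable fun n => Φ n ((∑' k, |a n k| * t k) / σ)

/-- The quasi-norm `‖T‖_Φ^A` evaluated on the sequence `t = (s_k(T))`. -/
noncomputable def OpANorm (Φ : ℕ → ℝ → ℝ) (a : ℕ → ℕ → ℝ) (t : ℕ → ℝ) : ℝ :=
  sInf {σ : ℝ | 0 < σ ∧ (Summable fun n => Φ n ((∑' k, |a n k| * t k) / σ)) ∧
    (∑' n, Φ n ((∑' k, |a n k| * t k) / σ)) ≤ 1}


/-! The `s`-numbers of `S + T` at `2k` and `2k + 1` are bounded by `s_k(S) + s_k(T)`, so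
condition (♦) bounds the row sums of `S + T` by `M` times those of `S` and `T`, and convexity
of the `φ_n` turns this into the quasi-triangle inequality; homogeneity comes from
`s_k(αT) = |α| s_k(T)`. Since `s_1(T) = ‖T‖` and the first column of `A` is nonzero, `‖T‖` is
bounded by a multiple of `‖T‖_Φ^A`. Hence a Cauchy sequence for `‖·‖_Φ^A` converges in operator
norm, and as the `s`-numbers are `1`-Lipschitz, Fatou's lemma for the modular shows that it
converges for `‖·‖_Φ^A` as well. -/

namespace IsOrliczFn

variable {φ : ℝ → ℝ} {x y : ℝ}

theorem nonneg (hφ : IsOrliczFn φ) (hx : 0 ≤ x) : 0 ≤ φ x :=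
  hφ.map_zero ▸ hφ.monotoneOn Set.self_mem_Ici hx hx

theorem mono (hφ : IsOrliczFn φ) (hx : 0 ≤ x) (hxy : x ≤ y) : φ x ≤ φ y :=
  hφ.monotoneOn hx (hx.trans hxy) hxy

theorem map_mul_le {c : ℝ} (hφ : IsOrliczFn φ) (hc₀ : 0 ≤ c) (hc₁ : c ≤ 1) (hx : 0 ≤ x) :
    φ (c * x) ≤ c * φ x := by
  simpa [hφ.map_zero] using
    hφ.convexOn.2 (Set.mem_Ici.2 hx) Set.self_mem_Ici hc₀ (sub_nonneg.2 hc₁) (by ring)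

theorem map_add_div_add_le {σ τ : ℝ} (hφ : IsOrliczFn φ) (hx : 0 ≤ x) (hy : 0 ≤ y)
    (hσ : 0 < σ) (hτ : 0 < τ) :
    φ ((x + y) / (σ + τ)) ≤ σ / (σ + τ) * φ (x / σ) + τ / (σ + τ) * φ (y / τ) := by
  have hστ : 0 < σ + τ := add_pos hσ hτ
  have hcomb : σ / (σ + τ) * (x / σ) + τ / (σ + τ) * (y / τ) = (x + y) / (σ + τ) := by
    rw [div_mul_div_comm, div_mul_div_comm, mul_comm σ x, mul_comm τ y,
      mul_div_mul_right _ _ hσ.ne', mul_div_mul_right _ _ hτ.ne', ← add_div]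
  simpa only [smul_eq_mul, hcomb] using
    hφ.convexOn.2 (Set.mem_Ici.2 (div_nonneg hx hσ.le)) (Set.mem_Ici.2 (div_nonneg hy hτ.le))
      (div_nonneg hσ.le hστ.le) (div_nonneg hτ.le hστ.le) (by rw [← add_div, div_self hστ.ne'])

theorem exists_le_of_map_le_one (hφ : IsOrliczFn φ) :
    ∃ B > 0, ∀ x, φ x ≤ 1 → x ≤ B := by
  obtain ⟨x₀, hx₀⟩ := (hφ.tendsto_atTop.eventually_gt_atTop 1).exists_forall_of_atTop
  refine ⟨max x₀ 1, lt_max_of_lt_right one_pos, fun x hx => ?_⟩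
  by_contra! hlt
  exact (hx₀ x (le_max_left _ _ |>.trans hlt.le)).not_ge hx

theorem tendsto_comp {ι : Type*} {L : Filter ι} {g : ι → ℝ} (hφ : IsOrliczFn φ)
    (hg : Tendsto g L (𝓝 x)) (hg₀ : ∀ i, 0 ≤ g i) (hx : 0 ≤ x) :
    Tendsto (fun i => φ (g i)) L (𝓝 (φ x)) :=
  (hφ.continuousOn x hx).tendsto.comp
    (tendsto_nhdsWithin_of_tendsto_nhds_of_eventually_within g hg (.of_forall hg₀))

end IsOrliczFn

section SequenceSpace

variable {Φ : ℕ → ℝ → ℝ} {a : ℕ → ℕ → ℝ} {t : ℕ → ℝ} {σ τ : ℝ}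

noncomputable def rowSum (a : ℕ → ℕ → ℝ) (t : ℕ → ℝ) (n : ℕ) : ℝ := ∑' k, |a n k| * t k

def opAdmissible (Φ : ℕ → ℝ → ℝ) (a : ℕ → ℕ → ℝ) (t : ℕ → ℝ) : Set ℝ :=
  {σ | 0 < σ ∧ (Summable fun n => Φ n (rowSum a t n / σ)) ∧
    ∑' n, Φ n (rowSum a t n / σ) ≤ 1}

theorem opANorm_eq_sInf : OpANorm Φ a t = sInf (opAdmissible Φ a t) := rfl

theorem rowSum_nonneg (ht : 0 ≤ t) (n : ℕ) : 0 ≤ rowSum a t n :=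
  tsum_nonneg fun k => mul_nonneg (abs_nonneg _) (ht k)

theorem opAdmissible_bddBelow : BddBelow (opAdmissible Φ a t) := ⟨0, fun _ hσ => hσ.1.le⟩

theorem opANorm_nonneg : 0 ≤ OpANorm Φ a t := Real.sInf_nonneg fun _ hσ => hσ.1.le

theorem opANorm_le_of_mem (hσ : σ ∈ opAdmissible Φ a t) : OpANorm Φ a t ≤ σ :=
  csInf_le opAdmissible_bddBelow hσ

theorem mem_opAdmissible_of_le (hΦ : IsMusielakOrlicz Φ) (ht : 0 ≤ t)
    (hσ : σ ∈ opAdmissible Φ a t) (hστ : σ ≤ τ) : τ ∈ opAdmissible Φ a t := by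
  obtain ⟨hσ₀, hsum, hle⟩ := hσ
  have hτ₀ : 0 < τ := hσ₀.trans_le hστ
  have hτσ : ∀ n, Φ n (rowSum a t n / τ) ≤ Φ n (rowSum a t n / σ) := fun n =>
    (hΦ n).mono (div_nonneg (rowSum_nonneg ht n) hτ₀.le)
      (div_le_div_of_nonneg_left (rowSum_nonneg ht n) hσ₀ hστ)
  have hsum' : Summable fun n => Φ n (rowSum a t n / τ) :=
    hsum.of_nonneg_of_le (fun n => (hΦ n).nonneg (div_nonneg (rowSum_nonneg ht n) hτ₀.le)) hτσ
  exact ⟨hτ₀, hsum', (hsum'.tsum_le_tsum hτσ hsum).trans hle⟩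

theorem OpMemL.of_mem_opAdmissible (hrow : ∀ n, Summable fun k => |a n k| * t k)
    (hσ : σ ∈ opAdmissible Φ a t) : OpMemL Φ a t :=
  ⟨hrow, σ, hσ.1, hσ.2.1⟩

/-- Dividing by `σ * c` with `c ≥ 1` shrinks the modular by a factor `c`, by convexity. -/
theorem OpMemL.opAdmissible_nonempty (hΦ : IsMusielakOrlicz Φ) (ht : 0 ≤ t)
    (h : OpMemL Φ a t) : (opAdmissible Φ a t).Nonempty := by
  obtain ⟨-, σ, hσ, hsum⟩ := h
  set c := max (∑' n, Φ n (rowSum a t n / σ)) 1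
  have hc : 1 ≤ c := le_max_right _ _
  have hc₀ : 0 < c := one_pos.trans_le hc
  have hle : ∀ n, Φ n (rowSum a t n / (σ * c)) ≤ c⁻¹ * Φ n (rowSum a t n / σ) := fun n => by
    rw [← div_div, div_eq_inv_mul _ c]
    exact (hΦ n).map_mul_le (inv_nonneg.2 hc₀.le) (inv_le_one_of_one_le₀ hc)
      (div_nonneg (rowSum_nonneg ht n) hσ.le)
  have hsum' : Summable fun n => Φ n (rowSum a t n / (σ * c)) :=
    (hsum.mul_left _).of_nonneg_of_le
      (fun n => (hΦ n).nonneg (div_nonneg (rowSum_nonneg ht n) (by positivity))) hle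
  refine ⟨σ * c, by positivity, hsum', ?_⟩
  calc ∑' n, Φ n (rowSum a t n / (σ * c))
      ≤ ∑' n, c⁻¹ * Φ n (rowSum a t n / σ) := hsum'.tsum_le_tsum hle (hsum.mul_left _)
    _ = c⁻¹ * ∑' n, Φ n (rowSum a t n / σ) := tsum_mul_left
    _ ≤ 1 := by rw [inv_mul_le_iff₀ hc₀, mul_one]; exact le_max_left _ _

theorem rowSum_const_mul (c : ℝ) (n : ℕ) : rowSum a (fun k => c * t k) n = c * rowSum a t n := by
  simp only [rowSum, mul_left_comm _ c, tsum_mul_left]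

theorem mem_opAdmissible_const_mul_iff {c : ℝ} (hc : 0 < c) :
    σ ∈ opAdmissible Φ a (fun k => c * t k) ↔ c⁻¹ * σ ∈ opAdmissible Φ a t := by
  have hdiv : ∀ n, rowSum a (fun k => c * t k) n / σ = rowSum a t n / (c⁻¹ * σ) := fun n => by
    rw [rowSum_const_mul]
    field_simp
  simp only [opAdmissible, Set.mem_ofPred_eq, hdiv, mul_pos_iff_of_pos_left (inv_pos.2 hc)]

open Pointwise in
theorem opANorm_const_mul {c : ℝ} (hc : 0 < c) :
    OpANorm Φ a (fun k => c * t k) = c * OpANorm Φ a t := by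
  have hset : opAdmissible Φ a (fun k => c * t k) = c • opAdmissible Φ a t := by
    ext σ
    rw [Set.mem_smul_set_iff_inv_smul_mem₀ hc.ne', smul_eq_mul, mem_opAdmissible_const_mul_iff hc]
  rw [opANorm_eq_sInf, opANorm_eq_sInf, hset, Real.sInf_smul_of_nonneg hc.le, smul_eq_mul]

theorem OpMemL.const_mul (hΦ : IsMusielakOrlicz Φ) (ht : 0 ≤ t) {c : ℝ} (hc : 0 < c)
    (h : OpMemL Φ a t) : OpMemL Φ a (fun k => c * t k) := by
  obtain ⟨σ, hσ⟩ := h.opAdmissible_nonempty hΦ ht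
  refine .of_mem_opAdmissible (fun n => ?_) (σ := c * σ) ?_
  · simpa only [mul_left_comm _ c] using (h.1 n).mul_left c
  · rwa [mem_opAdmissible_const_mul_iff hc, inv_mul_cancel_left₀ hc.ne']

theorem opAdmissible_zero (hΦ : IsMusielakOrlicz Φ) :
    opAdmissible Φ a 0 = Set.Ioi 0 := by
  ext σ
  simp [opAdmissible, rowSum, (hΦ _).map_zero]

theorem opANorm_zero (hΦ : IsMusielakOrlicz Φ) : OpANorm Φ a 0 = 0 := by
  rw [opANorm_eq_sInf, opAdmissible_zero hΦ, csInf_Ioi]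

theorem opMemL_zero (hΦ : IsMusielakOrlicz Φ) : OpMemL Φ a 0 :=
  .of_mem_opAdmissible (fun n => by simp)
    (by rw [opAdmissible_zero hΦ]; exact Set.mem_Ioi.2 one_pos)

/-- Every admissible `σ` forces `φ_n(row_n / σ) ≤ 1`, which bounds `row_n / σ`, and the row
`n` contains the term `|a_{n0}| t_0`. -/
theorem exists_apply_zero_le_mul_opANorm (hΦ : IsMusielakOrlicz Φ) {n : ℕ} (ha : a n 0 ≠ 0) :
    ∃ C > 0, ∀ t : ℕ → ℝ, 0 ≤ t → OpMemL Φ a t → t 0 ≤ C * OpANorm Φ a t := by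
  obtain ⟨B, hB, hBle⟩ := (hΦ n).exists_le_of_map_le_one
  have ha' : 0 < |a n 0| := abs_pos.2 ha
  refine ⟨B / |a n 0|, by positivity, fun t ht h => ?_⟩
  rw [opANorm_eq_sInf, ← div_le_iff₀' (by positivity)]
  refine le_csInf (h.opAdmissible_nonempty hΦ ht) fun σ ⟨hσ₀, hsum, hle⟩ => ?_
  have hterm : Φ n (rowSum a t n / σ) ≤ 1 := (hsum.le_tsum n fun m _ =>
    (hΦ m).nonneg (div_nonneg (rowSum_nonneg ht m) hσ₀.le)).trans hle
  rw [div_le_iff₀' (by positivity), div_mul_eq_mul_div, le_div_iff₀' ha']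
  calc |a n 0| * t 0 ≤ rowSum a t n := (h.1 n).le_tsum 0 fun k _ => mul_nonneg (abs_nonneg _) (ht k)
    _ = rowSum a t n / σ * σ := (div_mul_cancel₀ _ hσ₀.ne').symm
    _ ≤ B * σ := mul_le_mul_of_nonneg_right (hBle _ hterm) hσ₀.le

end SequenceSpace

section Diamond

variable {Φ : ℕ → ℝ → ℝ} {a : ℕ → ℕ → ℝ} {M : ℝ} {t u v : ℕ → ℝ} {σ τ : ℝ}

theorem CondDiamond.mono {N : ℝ} (hD : CondDiamond a M) (hMN : M ≤ N) : CondDiamond a N :=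
  fun n k => (hD n k).trans (mul_le_mul_of_nonneg_right hMN (abs_nonneg _))

/-- Splitting the row into even and odd columns, (♦) lets the column `k` of `w` dominate the
columns `2k`, `2k+1` of `v`. -/
theorem CondDiamond.rowSum_le {w : ℕ → ℝ} (hD : CondDiamond a M) (hw : 0 ≤ w) (hv : 0 ≤ v)
    (hvw : ∀ k, v (2 * k) ≤ w k ∧ v (2 * k + 1) ≤ w k) {n : ℕ}
    (hrow : Summable fun k => |a n k| * w k) :
    (Summable fun k => |a n k| * v k) ∧ rowSum a v n ≤ M * rowSum a w n := by
  set f := fun k => |a n k| * v k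
  have hf : ∀ k, 0 ≤ f k := fun k => mul_nonneg (abs_nonneg _) (hv k)
  have hpair : ∀ k, f (2 * k) + f (2 * k + 1) ≤ M * (|a n k| * w k) := fun k =>
    calc f (2 * k) + f (2 * k + 1) ≤ (|a n (2 * k)| + |a n (2 * k + 1)|) * w k := by
          rw [add_mul]
          exact add_le_add (mul_le_mul_of_nonneg_left (hvw k).1 (abs_nonneg _))
            (mul_le_mul_of_nonneg_left (hvw k).2 (abs_nonneg _))
      _ ≤ M * |a n k| * w k := mul_le_mul_of_nonneg_right (hD n k) (hw k)
      _ = M * (|a n k| * w k) := mul_assoc _ _ _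
  have heven : Summable fun k => f (2 * k) := (hrow.mul_left M).of_nonneg_of_le (fun _ => hf _)
    fun k => (le_add_of_nonneg_right (hf _)).trans (hpair k)
  have hodd : Summable fun k => f (2 * k + 1) := (hrow.mul_left M).of_nonneg_of_le
    (fun _ => hf _) fun k => (le_add_of_nonneg_left (hf _)).trans (hpair k)
  refine ⟨heven.even_add_odd hodd, ?_⟩
  calc rowSum a v n = ∑' k, (f (2 * k) + f (2 * k + 1)) := by
        rw [heven.tsum_add hodd, tsum_even_add_odd heven hodd]; rfl
    _ ≤ ∑' k, M * (|a n k| * w k) := (heven.add hodd).tsum_le_tsum hpair (hrow.mul_left M)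
    _ = M * rowSum a w n := tsum_mul_left

/-- The two modulars are combined by convexity of each `φ_n`. -/
theorem CondDiamond.mem_opAdmissible (hΦ : IsMusielakOrlicz Φ) (hM : 0 < M)
    (hD : CondDiamond a M) (ht : 0 ≤ t) (hu : 0 ≤ u) (hv : 0 ≤ v)
    (hvtu : ∀ k, v (2 * k) ≤ t k + u k ∧ v (2 * k + 1) ≤ t k + u k)
    (hrt : ∀ n, Summable fun k => |a n k| * t k) (hru : ∀ n, Summable fun k => |a n k| * u k)
    (hσ : σ ∈ opAdmissible Φ a t) (hτ : τ ∈ opAdmissible Φ a u) :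
    (∀ n, Summable fun k => |a n k| * v k) ∧ M * (σ + τ) ∈ opAdmissible Φ a v := by
  obtain ⟨hσ₀, hsumt, hlet⟩ := hσ
  obtain ⟨hτ₀, hsumu, hleu⟩ := hτ
  have hστ : 0 < σ + τ := add_pos hσ₀ hτ₀
  have hrow : ∀ n, Summable fun k => |a n k| * (t k + u k) := fun n => by
    simpa only [mul_add] using (hrt n).add (hru n)
  have hdom := fun n => hD.rowSum_le (add_nonneg ht hu) hv hvtu (hrow n)
  have hrowSum_add : ∀ n, rowSum a (t + u) n = rowSum a t n + rowSum a u n := fun n => by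
    simp only [rowSum, Pi.add_apply, mul_add]
    exact (hrt n).tsum_add (hru n)
  set g := fun n =>
    σ / (σ + τ) * Φ n (rowSum a t n / σ) + τ / (σ + τ) * Φ n (rowSum a u n / τ)
  have hle : ∀ n, Φ n (rowSum a v n / (M * (σ + τ))) ≤ g n := fun n => by
    have hdiv : rowSum a v n / (M * (σ + τ)) ≤ (rowSum a t n + rowSum a u n) / (σ + τ) := by
      rw [div_le_div_iff₀ (by positivity) hστ, ← hrowSum_add, ← mul_assoc,
        mul_comm (rowSum a (t + u) n) M]
      exact mul_le_mul_of_nonneg_right (hdom n).2 hστ.le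
    exact ((hΦ n).mono (div_nonneg (rowSum_nonneg hv n) (by positivity)) hdiv).trans
      ((hΦ n).map_add_div_add_le (rowSum_nonneg ht n) (rowSum_nonneg hu n) hσ₀ hτ₀)
  have hg : Summable g := (hsumt.mul_left _).add (hsumu.mul_left _)
  have hsumv : Summable fun n => Φ n (rowSum a v n / (M * (σ + τ))) := hg.of_nonneg_of_le
    (fun n => (hΦ n).nonneg (div_nonneg (rowSum_nonneg hv n) (by positivity))) hle
  refine ⟨fun n => (hdom n).1, by positivity, hsumv, ?_⟩
  calc ∑' n, Φ n (rowSum a v n / (M * (σ + τ))) ≤ ∑' n, g n := hsumv.tsum_le_tsum hle hg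
    _ = σ / (σ + τ) * ∑' n, Φ n (rowSum a t n / σ) +
          τ / (σ + τ) * ∑' n, Φ n (rowSum a u n / τ) := by
      rw [(hsumt.mul_left _).tsum_add (hsumu.mul_left _), tsum_mul_left, tsum_mul_left]
    _ ≤ σ / (σ + τ) * 1 + τ / (σ + τ) * 1 := by gcongr
    _ = 1 := by rw [mul_one, mul_one, ← add_div, div_self hστ.ne']

theorem CondDiamond.opMemL (hΦ : IsMusielakOrlicz Φ) (hM : 0 < M) (hD : CondDiamond a M)
    (ht : 0 ≤ t) (hu : 0 ≤ u) (hv : 0 ≤ v)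
    (hvtu : ∀ k, v (2 * k) ≤ t k + u k ∧ v (2 * k + 1) ≤ t k + u k)
    (hmt : OpMemL Φ a t) (hmu : OpMemL Φ a u) : OpMemL Φ a v := by
  obtain ⟨σ, hσ⟩ := hmt.opAdmissible_nonempty hΦ ht
  obtain ⟨τ, hτ⟩ := hmu.opAdmissible_nonempty hΦ hu
  obtain ⟨hrow, hadm⟩ := hD.mem_opAdmissible hΦ hM ht hu hv hvtu hmt.1 hmu.1 hσ hτ
  exact .of_mem_opAdmissible hrow hadm

open Pointwise in
theorem CondDiamond.opANorm_le (hΦ : IsMusielakOrlicz Φ) (hM : 0 < M) (hD : CondDiamond a M)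
    (ht : 0 ≤ t) (hu : 0 ≤ u) (hv : 0 ≤ v)
    (hvtu : ∀ k, v (2 * k) ≤ t k + u k ∧ v (2 * k + 1) ≤ t k + u k)
    (hmt : OpMemL Φ a t) (hmu : OpMemL Φ a u) :
    OpANorm Φ a v ≤ M * (OpANorm Φ a t + OpANorm Φ a u) := by
  have hne_t := hmt.opAdmissible_nonempty hΦ ht
  have hne_u := hmu.opAdmissible_nonempty hΦ hu
  have hsub : M • (opAdmissible Φ a t + opAdmissible Φ a u) ⊆ opAdmissible Φ a v := by
    rintro _ ⟨_, ⟨σ, hσ, τ, hτ, rfl⟩, rfl⟩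
    exact (hD.mem_opAdmissible hΦ hM ht hu hv hvtu hmt.1 hmu.1 hσ hτ).2
  calc OpANorm Φ a v ≤ sInf (M • (opAdmissible Φ a t + opAdmissible Φ a u)) :=
        csInf_le_csInf opAdmissible_bddBelow ((hne_t.add hne_u).smul_set) hsub
    _ = M * (OpANorm Φ a t + OpANorm Φ a u) := by
      rw [Real.sInf_smul_of_nonneg hM.le, csInf_add hne_t opAdmissible_bddBelow hne_u
        opAdmissible_bddBelow, smul_eq_mul, opANorm_eq_sInf, opANorm_eq_sInf]

end Diamond


section Closedness

open Finset

variable {Φ : ℕ → ℝ → ℝ} {a : ℕ → ℕ → ℝ} {t u : ℕ → ℝ} {σ : ℝ}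

/-- Each truncation depends continuously on finitely many coordinates of `t`, and together they
determine admissibility. -/
noncomputable def partialModular (Φ : ℕ → ℝ → ℝ) (a : ℕ → ℕ → ℝ) (t : ℕ → ℝ) (σ : ℝ)
    (N K : ℕ) : ℝ :=
  ∑ n ∈ range N, Φ n ((∑ k ∈ range K, |a n k| * t k) / σ)

theorem partialModular_le_one (hΦ : IsMusielakOrlicz Φ) (ht : 0 ≤ t)
    (hrow : ∀ n, Summable fun k => |a n k| * t k) (hσ : σ ∈ opAdmissible Φ a t) (N K : ℕ) :
    partialModular Φ a t σ N K ≤ 1 := by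
  obtain ⟨hσ₀, hsum, hle⟩ := hσ
  calc partialModular Φ a t σ N K ≤ ∑ n ∈ range N, Φ n (rowSum a t n / σ) := by
        refine sum_le_sum fun n _ => (hΦ n).mono
          (div_nonneg (sum_nonneg fun k _ => mul_nonneg (abs_nonneg _) (ht k)) hσ₀.le) ?_
        gcongr
        exact (hrow n).sum_le_tsum _ fun k _ => mul_nonneg (abs_nonneg _) (ht k)
    _ ≤ ∑' n, Φ n (rowSum a t n / σ) := hsum.sum_le_tsum _ fun n _ =>
        (hΦ n).nonneg (div_nonneg (rowSum_nonneg ht n) hσ₀.le)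
    _ ≤ 1 := hle

theorem summable_row_of_partialModular_le_one (hΦ : IsMusielakOrlicz Φ) (ht : 0 ≤ t)
    (hσ : 0 < σ) (h : ∀ N K, partialModular Φ a t σ N K ≤ 1) (n : ℕ) :
    Summable fun k => |a n k| * t k := by
  obtain ⟨B, -, hBle⟩ := (hΦ n).exists_le_of_map_le_one
  refine summable_of_sum_range_le (c := B * σ) (fun k => mul_nonneg (abs_nonneg _) (ht k))
    fun K => ?_
  have hterm : Φ n ((∑ k ∈ range K, |a n k| * t k) / σ) ≤ 1 :=
    (single_le_sum (f := fun m => Φ m ((∑ k ∈ range K, |a m k| * t k) / σ))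
      (fun m _ => (hΦ m).nonneg (div_nonneg
        (sum_nonneg fun k _ => mul_nonneg (abs_nonneg _) (ht k)) hσ.le))
      (self_mem_range_succ n)).trans (h (n + 1) K)
  exact (div_le_iff₀ hσ).1 (hBle _ hterm)

theorem mem_opAdmissible_of_partialModular_le_one (hΦ : IsMusielakOrlicz Φ) (ht : 0 ≤ t)
    (hσ : 0 < σ) (h : ∀ N K, partialModular Φ a t σ N K ≤ 1) : σ ∈ opAdmissible Φ a t := by
  have hnonneg : ∀ n, 0 ≤ Φ n (rowSum a t n / σ) := fun n =>
    (hΦ n).nonneg (div_nonneg (rowSum_nonneg ht n) hσ.le)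
  have hN : ∀ N, ∑ n ∈ range N, Φ n (rowSum a t n / σ) ≤ 1 := fun N => by
    refine le_of_tendsto (x := atTop) (tendsto_finsetSum _ fun n _ => ?_) (.of_forall (h N))
    exact (hΦ n).tendsto_comp
      ((summable_row_of_partialModular_le_one hΦ ht hσ h n).hasSum.tendsto_sum_nat.div_const σ)
      (fun K => div_nonneg (sum_nonneg fun k _ => mul_nonneg (abs_nonneg _) (ht k)) hσ.le)
      (div_nonneg (rowSum_nonneg ht n) hσ.le)
  exact ⟨hσ, summable_of_sum_range_le hnonneg hN, Real.tsum_le_of_sum_range_le hnonneg hN⟩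

theorem tendsto_partialModular (hΦ : IsMusielakOrlicz Φ) (hσ : 0 < σ) {ι : Type*}
    {L : Filter ι} {t : ι → ℕ → ℝ} (ht : ∀ i, 0 ≤ t i) (hu : 0 ≤ u)
    (hlim : ∀ k, Tendsto (fun i => t i k) L (𝓝 (u k))) (N K : ℕ) :
    Tendsto (fun i => partialModular Φ a (t i) σ N K) L (𝓝 (partialModular Φ a u σ N K)) :=
  tendsto_finsetSum _ fun n _ => (hΦ n).tendsto_comp
    ((tendsto_finsetSum _ fun k _ => (hlim k).const_mul _).div_const σ)
    (fun i => div_nonneg (sum_nonneg fun k _ => mul_nonneg (abs_nonneg _) (ht i k)) hσ.le)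
    (div_nonneg (sum_nonneg fun k _ => mul_nonneg (abs_nonneg _) (hu k)) hσ.le)

/-- Fatou's lemma for the modular. -/
theorem mem_opAdmissible_of_tendsto (hΦ : IsMusielakOrlicz Φ) {ι : Type*} {L : Filter ι}
    [L.NeBot] {t : ι → ℕ → ℝ} (ht : ∀ i, 0 ≤ t i)
    (hlim : ∀ k, Tendsto (fun i => t i k) L (𝓝 (u k)))
    (h : ∀ᶠ i in L, (∀ n, Summable fun k => |a n k| * t i k) ∧ σ ∈ opAdmissible Φ a (t i)) :
    (∀ n, Summable fun k => |a n k| * u k) ∧ σ ∈ opAdmissible Φ a u := by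
  have hu : 0 ≤ u := fun k => ge_of_tendsto (hlim k) (.of_forall fun i => ht i k)
  have hσ : 0 < σ := (h.exists.choose_spec.2).1
  have hpartial : ∀ N K, partialModular Φ a u σ N K ≤ 1 := fun N K =>
    le_of_tendsto (tendsto_partialModular hΦ hσ ht hu hlim N K)
      (h.mono fun i hi => partialModular_le_one hΦ (ht i) hi.1 hi.2 N K)
  exact ⟨summable_row_of_partialModular_le_one hΦ hu hσ hpartial,
    mem_opAdmissible_of_partialModular_le_one hΦ hu hσ hpartial⟩

end Closedness

namespace SNumberSeq

variable (s : SNumberSeq) {E F : Type} [NormedAddCommGroup E] [NormedSpace ℝ E] [CompleteSpace E]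
  [NormedAddCommGroup F] [NormedSpace ℝ F] [CompleteSpace F]

theorem s_zero : s.s E F 0 = 0 :=
  funext fun k => s.rank E F 0 k (by simp)

theorem s_smul_le (α : ℝ) (T : E →L[ℝ] F) (k : ℕ) : s.s E F (α • T) k ≤ |α| * s.s E F T k := by
  have hideal := s.ideal E F E F (α • ContinuousLinearMap.id ℝ F) T (ContinuousLinearMap.id ℝ E) k
  have hcomp : ((α • ContinuousLinearMap.id ℝ F).comp T).comp (ContinuousLinearMap.id ℝ E)
      = α • T := by ext x; simp
  have hnorm : ‖α • ContinuousLinearMap.id ℝ F‖ ≤ |α| :=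
    calc _ ≤ ‖α‖ * ‖ContinuousLinearMap.id ℝ F‖ := norm_smul_le _ _
      _ ≤ |α| := mul_le_of_le_one_right (abs_nonneg α) ContinuousLinearMap.norm_id_le
  rw [hcomp] at hideal
  calc s.s E F (α • T) k
      ≤ ‖α • ContinuousLinearMap.id ℝ F‖ * s.s E F T k * ‖ContinuousLinearMap.id ℝ E‖ := hideal
    _ ≤ |α| * s.s E F T k * 1 := by
      have := s.nonneg E F T k
      gcongr
      exact ContinuousLinearMap.norm_id_le
    _ = |α| * s.s E F T k := mul_one _

theorem s_smul (α : ℝ) (T : E →L[ℝ] F) (k : ℕ) : s.s E F (α • T) k = |α| * s.s E F T k := by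
  rcases eq_or_ne α 0 with rfl | hα
  · simp [s.s_zero]
  refine (s.s_smul_le α T k).antisymm ?_
  have h := s.s_smul_le α⁻¹ (α • T) k
  rw [inv_smul_smul₀ hα, abs_inv] at h
  rwa [le_inv_mul_iff₀ (abs_pos.2 hα)] at h

theorem lipschitzWith_s (k : ℕ) : LipschitzWith 1 fun T : E →L[ℝ] F => s.s E F T k :=
  .of_le_add fun S T => by
    simpa [s.norm_eq, dist_eq_norm] using s.additive E F T (S - T) k 0

theorem s_add_le (S T : E →L[ℝ] F) (k : ℕ) :
    s.s E F (S + T) (2 * k) ≤ s.s E F S k + s.s E F T k ∧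
      s.s E F (S + T) (2 * k + 1) ≤ s.s E F S k + s.s E F T k := by
  refine ⟨two_mul k ▸ s.additive E F S T k k, ?_⟩
  have h := s.additive E F S T k (k + 1)
  rw [← add_assoc, ← two_mul] at h
  linarith [s.antitone E F T k.le_succ]

end SNumberSeq

section OperatorIdeal

variable {Φ : ℕ → ℝ → ℝ} {a : ℕ → ℕ → ℝ} {M : ℝ} (s : SNumberSeq)
  {E F : Type} [NormedAddCommGroup E] [NormedSpace ℝ E] [CompleteSpace E]
  [NormedAddCommGroup F] [NormedSpace ℝ F] [CompleteSpace F]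

theorem opMemL_add (hΦ : IsMusielakOrlicz Φ) (hM : 0 < M) (hD : CondDiamond a M)
    {S T : E →L[ℝ] F} (hS : OpMemL Φ a (s.s E F S)) (hT : OpMemL Φ a (s.s E F T)) :
    OpMemL Φ a (s.s E F (S + T)) :=
  hD.opMemL hΦ hM (s.nonneg E F S) (s.nonneg E F T) (s.nonneg E F _) (s.s_add_le S T) hS hT

theorem opANorm_add_le (hΦ : IsMusielakOrlicz Φ) (hM : 0 < M) (hD : CondDiamond a M)
    {S T : E →L[ℝ] F} (hS : OpMemL Φ a (s.s E F S)) (hT : OpMemL Φ a (s.s E F T)) :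
    OpANorm Φ a (s.s E F (S + T)) ≤ M * (OpANorm Φ a (s.s E F S) + OpANorm Φ a (s.s E F T)) :=
  hD.opANorm_le hΦ hM (s.nonneg E F S) (s.nonneg E F T) (s.nonneg E F _) (s.s_add_le S T) hS hT

theorem opMemL_smul (hΦ : IsMusielakOrlicz Φ) (α : ℝ) {T : E →L[ℝ] F}
    (hT : OpMemL Φ a (s.s E F T)) : OpMemL Φ a (s.s E F (α • T)) := by
  rcases eq_or_ne α 0 with rfl | hα
  · rw [zero_smul, s.s_zero]
    exact opMemL_zero hΦ
  · rw [funext (s.s_smul α T)]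
    exact hT.const_mul hΦ (s.nonneg E F T) (abs_pos.2 hα)

theorem opANorm_smul (hΦ : IsMusielakOrlicz Φ) (α : ℝ) (T : E →L[ℝ] F) :
    OpANorm Φ a (s.s E F (α • T)) = |α| * OpANorm Φ a (s.s E F T) := by
  rcases eq_or_ne α 0 with rfl | hα
  · rw [zero_smul, s.s_zero, abs_zero, zero_mul]
    exact opANorm_zero hΦ
  · rw [funext (s.s_smul α T), opANorm_const_mul (abs_pos.2 hα)]

theorem opMemL_sub (hΦ : IsMusielakOrlicz Φ) (hM : 0 < M) (hD : CondDiamond a M)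
    {S T : E →L[ℝ] F} (hS : OpMemL Φ a (s.s E F S)) (hT : OpMemL Φ a (s.s E F T)) :
    OpMemL Φ a (s.s E F (S - T)) := by
  have h := opMemL_add s hΦ hM hD hS (opMemL_smul s hΦ (-1) hT)
  rwa [neg_one_smul, ← sub_eq_add_neg] at h

theorem exists_norm_le_mul_opANorm (hΦ : IsMusielakOrlicz Φ) {n : ℕ} (ha : a n 0 ≠ 0) :
    ∃ C > 0, ∀ T : E →L[ℝ] F, OpMemL Φ a (s.s E F T) → ‖T‖ ≤ C * OpANorm Φ a (s.s E F T) := by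
  obtain ⟨C, hC, hle⟩ := exists_apply_zero_le_mul_opANorm hΦ ha
  exact ⟨C, hC, fun T hT => s.norm_eq E F T ▸ hle _ (s.nonneg E F T) hT⟩

theorem opANorm_eq_zero_iff (hΦ : IsMusielakOrlicz Φ) {n : ℕ} (ha : a n 0 ≠ 0)
    {T : E →L[ℝ] F} (hT : OpMemL Φ a (s.s E F T)) : OpANorm Φ a (s.s E F T) = 0 ↔ T = 0 := by
  refine ⟨fun h0 => ?_, fun h0 => ?_⟩
  · obtain ⟨C, -, hle⟩ := exists_norm_le_mul_opANorm s hΦ ha (E := E) (F := F)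
    simpa [h0] using hle T hT
  · rw [h0, s.s_zero]
    exact opANorm_zero hΦ

/-- A Cauchy sequence for `‖·‖_Φ^A` is Cauchy in operator norm, and the admissibility of `ε`
for `f m - f l` survives the limit `l → ∞` because the `s`-numbers are `1`-Lipschitz. -/
theorem exists_tendsto_opANorm (hΦ : IsMusielakOrlicz Φ) (hM : 0 < M) (hD : CondDiamond a M)
    {n : ℕ} (ha : a n 0 ≠ 0) {f : ℕ → E →L[ℝ] F} (hf : ∀ m, OpMemL Φ a (s.s E F (f m)))
    (hcauchy : ∀ ε > 0, ∃ N, ∀ m ≥ N, ∀ l ≥ N, OpANorm Φ a (s.s E F (f m - f l)) < ε) :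
    ∃ T : E →L[ℝ] F, OpMemL Φ a (s.s E F T) ∧
      Tendsto (fun m => OpANorm Φ a (s.s E F (f m - T))) atTop (𝓝 0) := by
  have hsub : ∀ m l, OpMemL Φ a (s.s E F (f m - f l)) := fun m l =>
    opMemL_sub s hΦ hM hD (hf m) (hf l)
  obtain ⟨C, hC, hnorm⟩ := exists_norm_le_mul_opANorm s hΦ ha (E := E) (F := F)
  have hf_cauchy : CauchySeq f := Metric.cauchySeq_iff.2 fun ε hε => by
    obtain ⟨N, hN⟩ := hcauchy (ε / C) (div_pos hε hC)
    refine ⟨N, fun m hm l hl => ?_⟩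
    rw [dist_eq_norm]
    exact (hnorm _ (hsub m l)).trans_lt ((lt_div_iff₀' hC).1 (hN m hm l hl))
  obtain ⟨T, hfT⟩ := cauchySeq_tendsto_of_complete hf_cauchy
  have hlim : ∀ ε > 0, ∀ᶠ m in atTop, (∀ n, Summable fun k => |a n k| * s.s E F (f m - T) k) ∧
      ε ∈ opAdmissible Φ a (s.s E F (f m - T)) := fun ε hε => by
    obtain ⟨N, hN⟩ := hcauchy ε hε
    refine eventually_atTop.2 ⟨N, fun m hm => ?_⟩
    refine mem_opAdmissible_of_tendsto hΦ (L := atTop) (fun l => s.nonneg E F (f m - f l))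
      (fun k => ((s.lipschitzWith_s k).continuous.tendsto _).comp (tendsto_const_nhds.sub hfT))
      (eventually_atTop.2 ⟨N, fun l hl => ⟨(hsub m l).1, ?_⟩⟩)
    obtain ⟨σ, hσ, hσε⟩ := exists_lt_of_csInf_lt
      ((hsub m l).opAdmissible_nonempty hΦ (s.nonneg E F _)) (hN m hm l hl)
    exact mem_opAdmissible_of_le hΦ (s.nonneg E F _) hσ hσε.le
  obtain ⟨N, hN⟩ := eventually_atTop.1 (hlim 1 one_pos)
  have hT : OpMemL Φ a (s.s E F T) := by
    simpa only [sub_sub_cancel] using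
      opMemL_sub s hΦ hM hD (hf N) (OpMemL.of_mem_opAdmissible (hN N le_rfl).1 (hN N le_rfl).2)
  refine ⟨T, hT, tendsto_order.2 ⟨fun ε hε => .of_forall fun m => hε.trans_le opANorm_nonneg,
    fun ε hε => ?_⟩⟩
  filter_upwards [hlim (ε / 2) (half_pos hε)] with m hm
  exact (opANorm_le_of_mem hm.2).trans_lt (half_lt_self hε)

end OperatorIdeal

theorem opLPhiA_quasiBanach_general
    (Φ : ℕ → ℝ → ℝ) (hΦ : IsMusielakOrlicz Φ)
    (a : ℕ → ℕ → ℝ) (hA : MatrixClassA a)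
    (M : ℝ) (hD : CondDiamond a M)
    (s : SNumberSeq)
    (E F : Type) [NormedAddCommGroup E] [NormedSpace ℝ E] [CompleteSpace E]
    [NormedAddCommGroup F] [NormedSpace ℝ F] [CompleteSpace F] :
    (∀ S T : E →L[ℝ] F, OpMemL Φ a (s.s E F S) → OpMemL Φ a (s.s E F T) →
      OpMemL Φ a (s.s E F (S + T))) ∧
    (∀ (α : ℝ) (T : E →L[ℝ] F), OpMemL Φ a (s.s E F T) →
      OpMemL Φ a (s.s E F (α • T))) ∧
    (∀ T : E →L[ℝ] F, OpMemL Φ a (s.s E F T) →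
      (OpANorm Φ a (s.s E F T) = 0 ↔ T = 0)) ∧
    (∀ (α : ℝ) (T : E →L[ℝ] F), OpMemL Φ a (s.s E F T) →
      OpANorm Φ a (s.s E F (α • T)) = |α| * OpANorm Φ a (s.s E F T)) ∧
    (∀ S T : E →L[ℝ] F, OpMemL Φ a (s.s E F S) → OpMemL Φ a (s.s E F T) →
      OpANorm Φ a (s.s E F (S + T)) ≤
        max M 1 * (OpANorm Φ a (s.s E F S) + OpANorm Φ a (s.s E F T))) ∧
    (∀ f : ℕ → (E →L[ℝ] F), (∀ m, OpMemL Φ a (s.s E F (f m))) →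
      (∀ ε > (0 : ℝ), ∃ N : ℕ, ∀ m ≥ N, ∀ l ≥ N,
        OpANorm Φ a (s.s E F (f m - f l)) < ε) →
      ∃ T : E →L[ℝ] F, OpMemL Φ a (s.s E F T) ∧
        Tendsto (fun m => OpANorm Φ a (s.s E F (f m - T))) atTop (𝓝 0)) ∧
    (∃ C > (0 : ℝ), ∀ T : E →L[ℝ] F, OpMemL Φ a (s.s E F T) →
      ‖T‖ ≤ C * OpANorm Φ a (s.s E F T)) := by
  obtain ⟨n, ha⟩ := hA 0
  have hM' : 0 < max M 1 := lt_max_of_lt_right one_pos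
  have hD' : CondDiamond a (max M 1) := hD.mono (le_max_left M 1)
  exact ⟨fun S T => opMemL_add s hΦ hM' hD', fun α T => opMemL_smul s hΦ α,
    fun T => opANorm_eq_zero_iff s hΦ ha, fun α T _ => opANorm_smul s hΦ α T,
    fun S T => opANorm_add_le s hΦ hM' hD', fun f => exists_tendsto_opANorm s hΦ hM' hD' ha,
    exists_norm_le_mul_opANorm s hΦ ha⟩

/-- for `A ∈ 𝒜` satisfying condition (♦) with constant `M`,
`L_Φ^A(E,F)` is a linear subspace of `L(E,F)`, `‖·‖_Φ^A` is a quasi-norm on it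
(with constant `max M 1`), it is complete, and the inclusion into `L(E,F)` is
continuous. -/
theorem opLPhiA_quasiBanach
    (Φ : ℕ → ℝ → ℝ) (hΦ : IsMusielakOrlicz Φ)
    (a : ℕ → ℕ → ℝ) (hA : MatrixClassA a)
    (M : ℝ) (hM : 0 < M) (hD : CondDiamond a M)
    (s : SNumberSeq)
    (E F : Type) [NormedAddCommGroup E] [NormedSpace ℝ E] [CompleteSpace E]
    [NormedAddCommGroup F] [NormedSpace ℝ F] [CompleteSpace F] :
    (∀ S T : E →L[ℝ] F, OpMemL Φ a (s.s E F S) → OpMemL Φ a (s.s E F T) →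
      OpMemL Φ a (s.s E F (S + T))) ∧
    (∀ (α : ℝ) (T : E →L[ℝ] F), OpMemL Φ a (s.s E F T) →
      OpMemL Φ a (s.s E F (α • T))) ∧
    (∀ T : E →L[ℝ] F, OpMemL Φ a (s.s E F T) →
      (OpANorm Φ a (s.s E F T) = 0 ↔ T = 0)) ∧
    (∀ (α : ℝ) (T : E →L[ℝ] F), OpMemL Φ a (s.s E F T) →
      OpANorm Φ a (s.s E F (α • T)) = |α| * OpANorm Φ a (s.s E F T)) ∧
    (∀ S T : E →L[ℝ] F, OpMemL Φ a (s.s E F S) → OpMemL Φ a (s.s E F T) →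
      OpANorm Φ a (s.s E F (S + T)) ≤
        max M 1 * (OpANorm Φ a (s.s E F S) + OpANorm Φ a (s.s E F T))) ∧
    (∀ f : ℕ → (E →L[ℝ] F), (∀ m, OpMemL Φ a (s.s E F (f m))) →
      (∀ ε > (0 : ℝ), ∃ N : ℕ, ∀ m ≥ N, ∀ l ≥ N,
        OpANorm Φ a (s.s E F (f m - f l)) < ε) →
      ∃ T : E →L[ℝ] F, OpMemL Φ a (s.s E F T) ∧
        Tendsto (fun m => OpANorm Φ a (s.s E F (f m - T))) atTop (𝓝 0)) ∧
    (∃ C > (0 : ℝ), ∀ T : E →L[ℝ] F, OpMemL Φ a (s.s E F T) →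
      ‖T‖ ≤ C * OpANorm Φ a (s.s E F T)) :=
  opLPhiA_quasiBanach_general Φ hΦ a hA M hD s E F
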